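/- Let r be a positive integer and let c_ψ(m, r) denote the number of relatively prime compositions of m with exactly r parts, i.e., ordered r-tuples (a_1, …, a_r) of positive integers summing to m with gcd(a_1, …, a_r) = 1. Then for every positive integer n, ∑_{k=1}^{n} C(k−1, r−1)·ω(n−k) = ∑_{m=1}^{n} c_ψ(m, r) · ( ∑_{j=0}^{⌊(n−m)/m⌋} ω((n−m) − j·m) ), where C(a, b) denotes the binomial coefficient. -/

import Mathlib

open scoped Classical

/-- The pentagonal-number coefficient function `ω`: `ω 0 = 1`,
`ω m = (-1)^k` if `m = (3k² + k)/2` or `m = (3k² - k)/2` for a positive integer `k`,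
and `ω m = 0` otherwise (in particular for negative `m`). -/
noncomputable def pentaCoeff (m : ℤ) : ℤ :=
  if m = 0 then 1
  else if h : ∃ k : ℕ, 0 < k ∧ (2 * m = 3 * (k : ℤ) ^ 2 + k ∨ 2 * m = 3 * (k : ℤ) ^ 2 - k)
  then (-1) ^ h.choose
  else 0

/-- The inner sum `∑_{j=0}^{⌊(n-m)/m⌋} ω((n-m) - j·m)`. -/
noncomputable def pentaSum (n m : ℕ) : ℤ :=
  ∑ j ∈ Finset.range ((n - m) / m + 1), pentaCoeff (((n : ℤ) - m) - j * m)

/-- The number of relatively prime compositions of `m` with exactly `r` parts. -/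
noncomputable def relPrimeCompositionsWithParts (m r : ℕ) : ℕ :=
  ((Finset.univ : Finset (Composition m)).filter
    fun c => c.length = r ∧ (c.blocks : Multiset ℕ).gcd = 1).card

/-!
Cutting a composition of `k` into `r` parts happens at `r - 1` of the `k - 1` interior points,
so there are `C(k-1, r-1)` of them. Grouping these compositions by the gcd `d` of their parts and
dividing every part by `d` gives `C(k-1, r-1) = ∑_{m ∣ k} c_ψ(m, r)`. Substituting this on the
left and interchanging the sums over `k` and `m`, the coefficient of `c_ψ(m, r)` becomes the sum
of `ω(n - k)` over the multiples `k ≤ n` of `m`, which is the inner sum on the right.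
-/

open Finset

-- `compositionAsSetEquiv n c` is the set of interior boundaries of `c`, shifted down by one.
theorem CompositionAsSet.card_compositionAsSetEquiv {n : ℕ} (c : CompositionAsSet n) :
    #(compositionAsSetEquiv n c) = c.length - 1 := by
  rcases Nat.eq_zero_or_pos n with rfl | hn
  · have h0 : #(compositionAsSetEquiv 0 c) ≤ 0 := by
      simpa using card_le_univ (compositionAsSetEquiv 0 c)
    have h1 : #c.boundaries ≤ 1 := by simpa using card_le_univ c.boundaries
    rw [CompositionAsSet.length]
    omega
  let shift : Fin (n - 1) ↪ Fin (n + 1) :=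
    ⟨fun i => ⟨1 + i, by omega⟩, fun i j h => Fin.ext (by simpa using h)⟩
  have hmap : (compositionAsSetEquiv n c).map shift = c.boundaries \ {0, Fin.last n} := by
    ext j
    simp only [compositionAsSetEquiv, Equiv.coe_fn_mk, Set.toFinset_ofPred, mem_map, mem_filter,
      mem_univ, true_and, mem_sdiff, mem_insert, mem_singleton, not_or]
    constructor
    · rintro ⟨i, hi, rfl⟩
      have hi' : (i : ℕ) < n - 1 := i.2
      exact ⟨hi, Fin.ne_of_val_ne (by change 1 + (i : ℕ) ≠ 0; omega),
        Fin.ne_of_val_ne (by change 1 + (i : ℕ) ≠ n; omega)⟩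
    · rintro ⟨hj, hj0, hjn⟩
      have hj0 : (j : ℕ) ≠ 0 := Fin.val_ne_of_ne hj0
      have hjn : (j : ℕ) ≠ n := Fin.val_ne_of_ne hjn
      have hj' : (⟨1 + (j - 1), by omega⟩ : Fin (n + 1)) = j :=
        Fin.ext (by change 1 + ((j : ℕ) - 1) = j; omega)
      exact ⟨⟨j - 1, by omega⟩, hj'.symm ▸ hj, hj'⟩
  have hsub : ({0, Fin.last n} : Finset (Fin (n + 1))) ⊆ c.boundaries := by
    simp [insert_subset_iff, c.zero_mem, c.getLast_mem]
  have htwo : #({0, Fin.last n} : Finset (Fin (n + 1))) = 2 :=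
    card_pair (Fin.ext_iff.not.mpr (by simp only [Fin.val_zero, Fin.val_last]; omega))
  rw [← card_map shift, hmap, card_sdiff_of_subset hsub, htwo, c.card_boundaries_eq_succ_length]
  omega

theorem Composition.card_filter_length_eq {n r : ℕ} (hn : 0 < n) (hr : 0 < r) :
    #{c : Composition n | c.length = r} = (n - 1).choose (r - 1) := by
  rw [card_equiv ((compositionEquiv n).trans (compositionAsSetEquiv n))
      (t := powersetCard (r - 1) univ) fun c => ?_, card_powersetCard, card_univ,
    Fintype.card_fin]
  simp only [mem_filter, mem_univ, true_and, mem_powersetCard, subset_univ, Equiv.trans_apply,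
    compositionEquiv, Equiv.coe_fn_mk, CompositionAsSet.card_compositionAsSetEquiv,
    Composition.toCompositionAsSet_length]
  have := c.length_pos_of_pos hn
  omega

namespace Composition

def scale {m : ℕ} (c : Composition m) {d : ℕ} (hd : 0 < d) : Composition (d * m) where
  blocks := c.blocks.map (d * ·)
  blocks_pos := by
    simpa only [List.mem_map, forall_exists_index, and_imp, forall_apply_eq_imp_iff₂] using
      fun x hx => Nat.mul_pos hd (c.blocks_pos hx)
  blocks_sum := by rw [List.sum_map_mul_left, List.map_id', c.blocks_sum]

variable {m d : ℕ} (hd : 0 < d)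

@[simp]
theorem length_scale (c : Composition m) : (c.scale hd).length = c.length :=
  List.length_map _

theorem gcd_scale (c : Composition m) :
    ((c.scale hd).blocks : Multiset ℕ).gcd = d * (c.blocks : Multiset ℕ).gcd := by
  rw [scale, ← Multiset.map_coe, Multiset.gcd_map_mul, normalize_eq]

theorem scale_injective : Function.Injective (scale (m := m) · hd) := fun _ _ h =>
  Composition.ext <| List.map_injective_iff.mpr (fun _ _ => Nat.eq_of_mul_eq_mul_left hd)
    (congrArg Composition.blocks h)

theorem exists_scale_eq (c : Composition (d * m)) (hc : ∀ b ∈ c.blocks, d ∣ b) :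
    ∃ c' : Composition m, c'.scale hd = c := by
  have hmul : (c.blocks.map (· / d)).map (d * ·) = c.blocks := by
    rw [List.map_map]
    exact (List.map_congr_left fun b hb => Nat.mul_div_cancel' (hc b hb)).trans c.blocks.map_id
  refine ⟨⟨c.blocks.map (· / d), ?_, ?_⟩, Composition.ext hmul⟩
  · simp only [List.mem_map, forall_exists_index, and_imp, forall_apply_eq_imp_iff₂]
    exact fun b hb => Nat.div_pos (Nat.le_of_dvd (c.blocks_pos hb) (hc b hb)) hd
  · apply Nat.eq_of_mul_eq_mul_left hd
    have := congrArg List.sum hmul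
    rwa [List.sum_map_mul_left, List.map_id', c.blocks_sum] at this

end Composition

theorem card_filter_length_gcd_eq {d m : ℕ} (hd : 0 < d) (r : ℕ) :
    #{c : Composition (d * m) | c.length = r ∧ (c.blocks : Multiset ℕ).gcd = d} =
      relPrimeCompositionsWithParts m r := by
  symm
  refine card_bij (fun c _ => c.scale hd) (fun c hc => ?_)
    (fun c _ c' _ h => c.scale_injective hd h) (fun c hc => ?_)
  · simp only [mem_filter, mem_univ, true_and] at hc ⊢
    rw [Composition.length_scale, Composition.gcd_scale, hc.2, mul_one]
    exact ⟨hc.1, rfl⟩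
  · simp only [mem_filter, mem_univ, true_and] at hc
    obtain ⟨c', rfl⟩ := c.exists_scale_eq hd fun b hb => hc.2 ▸ Multiset.gcd_dvd (by exact hb)
    refine ⟨c', ?_, rfl⟩
    simp only [mem_filter, mem_univ, true_and]
    rw [Composition.length_scale, Composition.gcd_scale] at hc
    exact ⟨hc.1, (Nat.mul_eq_left hd.ne').mp hc.2⟩

theorem card_filter_length_eq_sum_divisors {n : ℕ} (hn : 0 < n) (r : ℕ) :
    #{c : Composition n | c.length = r} =
      ∑ m ∈ n.divisors, relPrimeCompositionsWithParts m r := by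
  have hgcd (c : Composition n) : (c.blocks : Multiset ℕ).gcd ∈ n.divisors := by
    refine Nat.mem_divisors.mpr ⟨?_, hn.ne'⟩
    have := List.dvd_sum fun b (hb : b ∈ c.blocks) => Multiset.gcd_dvd (Multiset.mem_coe.mpr hb)
    rwa [c.blocks_sum] at this
  rw [← Nat.sum_div_divisors, card_eq_sum_card_fiberwise fun c _ => hgcd c]
  refine sum_congr rfl fun d hd => ?_
  obtain ⟨⟨m, rfl⟩, -⟩ := Nat.mem_divisors.mp hd
  rw [filter_filter, card_filter_length_gcd_eq (Nat.pos_of_mem_divisors hd),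
    Nat.mul_div_cancel_left _ (Nat.pos_of_mem_divisors hd)]

theorem sum_Icc_sum_divisors_mul {R : Type*} [CommSemiring R] (f g : ℕ → R) (n : ℕ) :
    ∑ k ∈ Icc 1 n, (∑ m ∈ k.divisors, f m) * g k =
      ∑ m ∈ Icc 1 n, f m * ∑ k ∈ Icc 1 n with m ∣ k, g k := by
  simp_rw [sum_mul, mul_sum]
  refine sum_comm' fun k m => ?_
  simp only [mem_Icc, Nat.mem_divisors, mem_filter]
  constructor
  · rintro ⟨hk, hmk, -⟩
    exact ⟨⟨hk, hmk⟩, Nat.pos_of_dvd_of_pos hmk hk.1, (Nat.le_of_dvd hk.1 hmk).trans hk.2⟩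
  · rintro ⟨⟨hk, hmk⟩, -⟩
    exact ⟨hk, hmk, by omega⟩

theorem sum_range_sub_mul_eq_sum_filter_dvd {M : Type*} [AddCommMonoid M] (f : ℤ → M)
    {m n : ℕ} (hm : 0 < m) (hmn : m ≤ n) :
    ∑ j ∈ range ((n - m) / m + 1), f (((n : ℤ) - m) - j * m) =
      ∑ k ∈ Icc 1 n with m ∣ k, f (n - k) := by
  have hj (j : ℕ) : j < (n - m) / m + 1 ↔ (j + 1) * m ≤ n := by
    rw [Nat.lt_succ_iff, Nat.le_div_iff_mul_le hm, add_one_mul]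
    omega
  refine sum_nbij' (fun j => (j + 1) * m) (fun k => k / m - 1) (fun j hjr => ?_) (fun k hk => ?_)
    (fun j _ => ?_) (fun k hk => ?_) (fun j _ => ?_)
  · simp only [mem_range, mem_filter, mem_Icc] at hjr ⊢
    exact ⟨⟨Nat.mul_pos j.succ_pos hm, (hj j).mp hjr⟩, dvd_mul_left m _⟩
  · simp only [mem_range, mem_filter, mem_Icc] at hk ⊢
    obtain ⟨⟨hk1, hkn⟩, c, rfl⟩ := hk
    rw [hj, Nat.mul_div_cancel_left c hm, Nat.sub_add_cancel (Nat.pos_of_mul_pos_left hk1),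
      mul_comm]
    exact hkn
  · simp [Nat.mul_div_cancel _ hm]
  · simp only [mem_filter, mem_Icc] at hk
    obtain ⟨⟨hk1, -⟩, c, rfl⟩ := hk
    rw [Nat.mul_div_cancel_left c hm, Nat.sub_add_cancel (Nat.pos_of_mul_pos_left hk1), mul_comm]
  · congr 1
    push_cast
    ring

theorem euler_type_relPrimeCompositionsWithParts_general (r : ℕ) (hr : 0 < r) (n : ℕ) :
    ∑ k ∈ Finset.Icc 1 n, ((k - 1).choose (r - 1) : ℤ) * pentaCoeff ((n : ℤ) - k) =
      ∑ m ∈ Finset.Icc 1 n, (relPrimeCompositionsWithParts m r : ℤ) * pentaSum n m := by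
  have hchoose : ∀ k ∈ Icc 1 n, ((k - 1).choose (r - 1) : ℤ) =
      ∑ m ∈ k.divisors, (relPrimeCompositionsWithParts m r : ℤ) := fun k hk => by
    have hk : 0 < k := (mem_Icc.mp hk).1
    rw [← Composition.card_filter_length_eq hk hr, card_filter_length_eq_sum_divisors hk,
      Nat.cast_sum]
  have hpenta : ∀ m ∈ Icc 1 n,
      pentaSum n m = ∑ k ∈ Icc 1 n with m ∣ k, pentaCoeff ((n : ℤ) - k) := fun m hm =>
    sum_range_sub_mul_eq_sum_filter_dvd _ (mem_Icc.mp hm).1 (mem_Icc.mp hm).2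
  rw [sum_congr rfl fun k hk => congrArg (· * _) (hchoose k hk), sum_Icc_sum_divisors_mul,
    sum_congr rfl fun m hm => congrArg (_ * ·) (hpenta m hm)]

theorem euler_type_relPrimeCompositionsWithParts (r : ℕ) (hr : 0 < r) (n : ℕ) (hn : 0 < n) :
    ∑ k ∈ Finset.Icc 1 n, ((k - 1).choose (r - 1) : ℤ) * pentaCoeff ((n : ℤ) - k) =
      ∑ m ∈ Finset.Icc 1 n, (relPrimeCompositionsWithParts m r : ℤ) * pentaSum n m :=
  euler_type_relPrimeCompositionsWithParts_general r hr n
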